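/- Let T be a tree of order at least 3 with maximum degree t, and let 𝒢 be an Abelian group of odd order k ≥ max{7, t+2}. Then there exists a 𝒢-twin edge coloring of T, unless T is a (3^p − 2)-regular tree and 𝒢 ≅ (ℤ_3)^p for some integer p. -/

import Mathlib

open Finset SimpleGraph

/-- A `𝒢`-twin edge coloring of `G`: a proper edge labeling `f : E(G) → 𝒢` such that
the induced weighted degrees `w(v) = ∑_{u ∈ N(v)} f(uv)` differ on adjacent vertices. -/
def IsTwinEdgeColoring {V : Type} [Fintype V] (G : SimpleGraph V) [DecidableRel G.Adj]
    {A : Type} [AddCommGroup A] (f : Sym2 V → A) : Prop :=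
  (∀ u v w : V, G.Adj u v → G.Adj u w → v ≠ w → f s(u, v) ≠ f s(u, w)) ∧
  (∀ u v : V, G.Adj u v →
    ∑ x ∈ G.neighborFinset u, f s(x, u) ≠ ∑ x ∈ G.neighborFinset v, f s(x, v))


/-- A tree is `r`-regular if every non-leaf vertex has degree `r`. -/
def IsRegularTreeDeg {V : Type} [Fintype V] (G : SimpleGraph V) [DecidableRel G.Adj]
    (r : ℕ) : Prop :=
  ∀ v : V, G.degree v ≠ 1 → G.degree v = r

/-!
Root the tree at a leaf `r`, give its edge a label `c₀ ≠ 0`, and label the remaining edges from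
the top down. At a vertex `v` whose parent edge has label `c` and whose parent has weight `b`, the
child edges receive a set `B` of labels, avoiding `c`, with `c + ∑ B ≠ b`; a leaf child must also
avoid the label `c + ∑ B`, the weight of `v`. Because `A` has odd order, `x ↦ -x` pairs up the
nonzero elements, which gives sets `B ∌ 0, c` of every admissible size with `∑ B = 0` or
`∑ B = -c`, so that the weight of `v` is `c` or `0` and clashes with no child.

The only obstruction occurs when `b = c` and `v` has degree `|A| - 2`: then the weight of `v` is
forced to be the label of one of its children. If all children are leaves, one can still use
`B = A \ {c, t, -2t}` with `3t ≠ 0`; otherwise an internal child inherits the situation `b = c`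
and passes it further down, towards a vertex of degree other than `|A| - 2`. This fails only for a
`(|A| - 2)`-regular tree and an elementary abelian `3`-group `A ≅ (ℤ₃)ᵖ`.
-/

namespace TreeTwinColoring

variable {A : Type*} [AddCommGroup A]

section OddOrder

variable [Fintype A] (hodd : Odd (Fintype.card A))
include hodd

lemma two_nsmul_bijective_of_odd_card : Function.Bijective (fun a : A => 2 • a) :=
  Nat.Coprime.nsmul_right_bijective (by rwa [Nat.card_eq_fintype_card, Nat.coprime_two_right])

lemma eq_zero_of_add_self_eq_zero {a : A} (h : a + a = 0) : a = 0 :=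
  (two_nsmul_bijective_of_odd_card hodd).1 (by simpa [two_nsmul] using h)

lemma neg_ne_self_of_odd_card {a : A} (ha : a ≠ 0) : -a ≠ a :=
  fun h => ha (eq_zero_of_add_self_eq_zero hodd (neg_eq_iff_add_eq_zero.mp h))

lemma sum_univ_eq_zero_of_odd_card : ∑ a : A, a = 0 := by
  refine eq_zero_of_add_self_eq_zero hodd ?_
  have hneg : ∑ a : A, -a = ∑ a : A, a := Fintype.sum_equiv (Equiv.neg A) _ _ fun _ => rfl
  rw [Finset.sum_neg_distrib] at hneg
  nth_rw 1 [← hneg]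
  exact neg_add_cancel _

lemma sum_compl_eq_neg_sum [DecidableEq A] (s : Finset A) : ∑ x ∈ sᶜ, x = -∑ x ∈ s, x := by
  rw [eq_neg_iff_add_eq_zero, sum_compl_add_sum, sum_univ_eq_zero_of_odd_card hodd]

lemma exists_three_nsmul_ne_zero {c : A} (hc : c ≠ 0) (h3 : ¬ ∀ a : A, 3 • a = 0) :
    ∃ t : A, 3 • t ≠ 0 ∧ t ≠ c ∧ t + t ≠ -c := by
  obtain ⟨s, hs⟩ := not_forall.mp h3
  have hs0 : s ≠ 0 := by rintro rfl; simp at hs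
  have hcc : -c ≠ c := neg_ne_self_of_odd_card hodd hc
  by_cases h : s ≠ c ∧ s + s ≠ -c
  · exact ⟨s, hs, h⟩
  refine ⟨-s, by simpa using hs, ?_, ?_⟩ <;> grind

lemma exists_disjoint_card_eq_sum_eq_zero (n : ℕ) :
    ∀ F : Finset A, 0 ∈ F → (∀ x ∈ F, -x ∈ F) → #F + 2 * n ≤ Fintype.card A →
      ∃ P : Finset A, Disjoint P F ∧ #P = 2 * n ∧ ∑ x ∈ P, x = 0 := by
  classical
  induction n with
  | zero => exact fun F _ _ _ => ⟨∅, by simp⟩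
  | succ n ih =>
    intro F h0 hneg hcard
    obtain ⟨x, -, hxF⟩ := exists_mem_notMem_of_card_lt_card (s := F) (t := univ)
      (by rw [card_univ]; omega)
    have hnxF : -x ∉ F := fun h => hxF (by simpa using hneg _ h)
    have hnx : -x ≠ x := neg_ne_self_of_odd_card hodd (by rintro rfl; exact hxF h0)
    obtain ⟨P, hPF, hP, hsum⟩ := ih (insert x (insert (-x) F)) (by simp [h0])
      (by simp only [mem_insert]; rintro y (rfl | rfl | hy) <;> simp [hneg _ ‹_›])
      (by rw [card_insert_of_notMem (by simp [hxF, hnx.symm]), card_insert_of_notMem hnxF]; omega)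
    simp only [disjoint_insert_right] at hPF
    refine ⟨insert x (insert (-x) P), ?_, ?_, ?_⟩
    · simp [hxF, hnxF, hPF.2.2]
    · rw [card_insert_of_notMem (by simp [hnx.symm, hPF.1]), card_insert_of_notMem hPF.2.1]
      omega
    · rw [sum_insert (by simp [hnx.symm, hPF.1]), sum_insert hPF.2.1, hsum]
      abel

lemma exists_card_eq_sum_eq_neg {c : A} (hc : c ≠ 0) {m : ℕ}
    (hm : 1 ≤ m) (hmk : m + 4 ≤ Fintype.card A) :
    ∃ B : Finset A, 0 ∉ B ∧ c ∉ B ∧ #B = m ∧ ∑ x ∈ B, x = -c := by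
  classical
  have hcc : -c ≠ c := neg_ne_self_of_odd_card hodd hc
  obtain ⟨n, rfl | rfl⟩ : ∃ n, m = 2 * n + 1 ∨ m = 2 * n + 2 := ⟨(m - 1) / 2, by omega⟩
  · obtain ⟨P, hPF, hP, hsum⟩ := exists_disjoint_card_eq_sum_eq_zero hodd n {0, c, -c}
      (by simp) (by simp only [mem_insert, mem_singleton]; rintro x (rfl | rfl | rfl) <;> simp)
      (by have := card_le_three (a := 0) (b := c) (c := -c); omega)
    simp only [disjoint_insert_right, disjoint_singleton_right] at hPF
    refine ⟨insert (-c) P, by simp [hc, hPF.1], by simp [hcc.symm, hPF.2.1], ?_, ?_⟩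
    · rw [card_insert_of_notMem hPF.2.2, hP]
    · rw [sum_insert hPF.2.2, hsum, add_zero]
  · -- `x` is chosen so that `x` and `-(x + c)` are distinct and avoid `0` and `c`
    obtain ⟨half, hhalf⟩ := (two_nsmul_bijective_of_odd_card hodd).2 (-c)
    have hcard : #({0, c, -c, -c - c, half} : Finset A) < #(univ : Finset A) :=
      card_le_five.trans_lt (by rw [card_univ]; omega)
    obtain ⟨x, -, hx⟩ := exists_mem_notMem_of_card_lt_card hcard
    simp only [mem_insert, mem_singleton, not_or] at hx
    have hxx : x + x ≠ -c := fun hx' =>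
      hx.2.2.2.2 ((two_nsmul_bijective_of_odd_card hodd).1 (by simp only [hhalf, two_nsmul, hx']))
    have hF : #({0, c, -c, x, -x, x + c, -(x + c)} : Finset A) ≤ 7 :=
      (card_insert_le _ _).trans (Nat.succ_le_succ card_le_six)
    obtain ⟨P, hPF, hP, hsum⟩ :=
      exists_disjoint_card_eq_sum_eq_zero hodd n {0, c, -c, x, -x, x + c, -(x + c)} (by simp)
        (by simp only [mem_insert, mem_singleton]
            rintro y (rfl | rfl | rfl | rfl | rfl | rfl | rfl) <;> simp)
        (by obtain ⟨j, hj⟩ := hodd; omega)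
    simp only [disjoint_insert_right, disjoint_singleton_right] at hPF
    have hxP : x ∉ insert (-(x + c)) P := by
      simp only [mem_insert, not_or]; exact ⟨fun h' => hxx (by grind), hPF.2.2.2.1⟩
    refine ⟨insert x (insert (-(x + c)) P), ?_, ?_, ?_, ?_⟩
    · simp only [mem_insert, not_or]; exact ⟨fun h' => hx.1 h'.symm, by grind, hPF.1⟩
    · simp only [mem_insert, not_or]; exact ⟨fun h' => hx.2.1 h'.symm, by grind, hPF.2.1⟩
    · rw [card_insert_of_notMem hxP, card_insert_of_notMem hPF.2.2.2.2.2.2, hP]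
    · rw [sum_insert hxP, sum_insert hPF.2.2.2.2.2.2, hsum]
      abel

lemma exists_card_eq_sum_eq_zero {c : A} (hc : c ≠ 0) {m : ℕ}
    (hm : 2 ≤ m) (hmk : m + 3 ≤ Fintype.card A) :
    ∃ B : Finset A, 0 ∉ B ∧ c ∉ B ∧ #B = m ∧ ∑ x ∈ B, x = 0 := by
  classical
  obtain ⟨B, h0B, hcB, hB, hsum⟩ :=
    exists_card_eq_sum_eq_neg hodd hc (m := Fintype.card A - 2 - m) (by omega) (by omega)
  have h0cB : 0 ∉ insert c B := by simp [hc.symm, h0B]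
  refine ⟨(insert 0 (insert c B))ᶜ, by simp, by simp, ?_, ?_⟩
  · rw [card_compl, card_insert_of_notMem h0cB, card_insert_of_notMem hcB]
    omega
  · rw [sum_compl_eq_neg_sum hodd, sum_insert h0cB, sum_insert hcB, hsum]
    abel

end OddOrder

lemma exists_addEquiv_pi_zmod_three [Fintype A] (h3 : ∀ a : A, 3 • a = 0) :
    ∃ p : ℕ, Fintype.card A = 3 ^ p ∧ Nonempty (A ≃+ (Fin p → ZMod 3)) := by
  let _ : Module (ZMod 3) A := AddCommGroup.zmodModule h3
  exact ⟨Module.finrank (ZMod 3) A,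
    by simpa using Module.card_eq_pow_finrank (K := ZMod 3) (V := A),
    ⟨(Module.finBasis (ZMod 3) A).equivFun.toAddEquiv⟩⟩

section GoodLabeling

variable {ι : Type*}

/-- `σ` labels the edges from a vertex to its children `C`, where `c` is the label of the edge to
its parent and `b` the weight of that parent, so that the vertex gets weight `c + ∑ σ`. Children
in `Z` may get label `0`, and children in `P` may get the vertex's own weight as label; such a child
then has to repair the conflict in its own subtree. -/
def IsGoodLabeling (C : Finset ι) (Z P : ι → Prop) (c b : A) (σ : ι → A) : Prop :=
  Set.InjOn σ C ∧ c + ∑ u ∈ C, σ u ≠ b ∧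
    ∀ u ∈ C, σ u ≠ c ∧ (σ u = 0 → Z u) ∧ (σ u = c + ∑ x ∈ C, σ x → P u)

lemma exists_bijOn_apply_eq {β : Type*} {C : Finset ι} {B : Finset β} (h : #C = #B) {u₀ : ι}
    (hu₀ : u₀ ∈ C) {b₀ : β} (hb₀ : b₀ ∈ B) : ∃ σ : ι → β, Set.BijOn σ C B ∧ σ u₀ = b₀ := by
  classical
  have : Nonempty β := ⟨b₀⟩
  obtain ⟨τ, hτ⟩ := C.finite_toSet.exists_bijOn_of_encard_eq (t := (B : Set β)) (by simp [h])
  exact ⟨Equiv.swap (τ u₀) b₀ ∘ τ, (Equiv.bijOn_swap (hτ.mapsTo hu₀) hb₀).comp hτ, by simp⟩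

lemma isGoodLabeling_of_bijOn {C : Finset ι} {Z P : ι → Prop} {c b : A} {B : Finset A}
    {σ : ι → A} (hσ : Set.BijOn σ C B) (hcB : c ∉ B) (hb : c + ∑ x ∈ B, x ≠ b)
    (hZ : 0 ∈ B → ∀ u ∈ C, Z u) (hP : ∀ u ∈ C, σ u = c + ∑ x ∈ B, x → P u) :
    IsGoodLabeling C Z P c b σ := by
  have hsum : ∑ u ∈ C, σ u = ∑ x ∈ B, x :=
    sum_nbij σ hσ.mapsTo hσ.injOn hσ.surjOn fun _ _ => rfl
  refine ⟨hσ.injOn, hsum ▸ hb, fun u hu => ⟨?_, fun h0 => hZ (h0 ▸ hσ.mapsTo hu) u hu,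
    hsum ▸ hP u hu⟩⟩
  rintro h
  exact hcB (h ▸ hσ.mapsTo hu)

lemma exists_isGoodLabeling_of_card_eq {C : Finset ι} {Z P : ι → Prop} {c b : A}
    {B : Finset A} (hC : C.Nonempty) (hCB : #C = #B) (hcB : c ∉ B) (hWB : c + ∑ x ∈ B, x ∉ B)
    (hb : c + ∑ x ∈ B, x ≠ b) (hZ : 0 ∈ B → ∀ u ∈ C, Z u) : ∃ σ, IsGoodLabeling C Z P c b σ := by
  obtain ⟨u₀, hu₀⟩ := hC
  obtain ⟨b₀, hb₀⟩ := card_pos.mp (hCB ▸ card_pos.mpr ⟨u₀, hu₀⟩)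
  obtain ⟨σ, hσ, -⟩ := exists_bijOn_apply_eq hCB hu₀ hb₀
  exact ⟨σ, isGoodLabeling_of_bijOn hσ hcB hb hZ fun u hu h => absurd (h ▸ hσ.mapsTo hu) hWB⟩

variable [Fintype A] (hodd : Odd (Fintype.card A)) {C : Finset ι} {Z P : ι → Prop} {c : A}
include hodd

lemma exists_isGoodLabeling_of_mem (hc : c ≠ 0) (hCk : #C + 3 = Fintype.card A) {u₀ : ι}
    (hu₀ : u₀ ∈ C) (hP : P u₀) : ∃ σ, IsGoodLabeling C Z P c c σ := by
  classical
  have hC := card_pos.mpr ⟨u₀, hu₀⟩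
  obtain ⟨x, -, hx⟩ := exists_mem_notMem_of_card_lt_card (s := {0, c, -c}) (t := univ)
    (card_le_three.trans_lt (by rw [card_univ]; omega))
  simp only [mem_insert, mem_singleton, not_or] at hx
  -- all labels except `0`, `c` and `x`; the weight is then `-x`, given to `u₀`
  have hB : #C = #({0, c, x} : Finset A)ᶜ := by
    rw [card_compl, card_eq_three.mpr ⟨0, c, x, hc.symm, fun h => hx.1 h.symm,
      fun h => hx.2.1 h.symm, rfl⟩]
    omega
  have hW : c + ∑ y ∈ ({0, c, x} : Finset A)ᶜ, y = -x := by
    rw [sum_compl_eq_neg_sum hodd, sum_insert (by simp [hc.symm, Ne.symm hx.1]),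
      sum_pair (fun h => hx.2.1 h.symm)]
    abel
  have hnx : -x ∈ ({0, c, x} : Finset A)ᶜ := by
    simp only [mem_compl, mem_insert, mem_singleton, not_or]
    exact ⟨by simpa using hx.1, fun h => hx.2.2 (by rw [← h, neg_neg]),
      neg_ne_self_of_odd_card hodd hx.1⟩
  obtain ⟨σ, hσ, hσu₀⟩ := exists_bijOn_apply_eq hB hu₀ hnx
  refine ⟨σ, isGoodLabeling_of_bijOn hσ (by simp) ?_ (by simp) fun u hu h => ?_⟩
  · rw [hW]
    exact fun h => hx.2.2 (by rw [← h, neg_neg])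
  · rwa [hσ.injOn hu hu₀ (h.trans (hW.trans hσu₀.symm))]

lemma exists_isGoodLabeling_of_forall_mem (hc : c ≠ 0) (hC : C.Nonempty)
    (hCk : #C + 3 = Fintype.card A) (hZ : ∀ u ∈ C, Z u) (h3 : ¬ ∀ a : A, 3 • a = 0) :
    ∃ σ, IsGoodLabeling C Z P c c σ := by
  classical
  obtain ⟨t, ht3, htc, htt⟩ := exists_three_nsmul_ne_zero hodd hc h3
  -- all labels except `c`, `t` and `-2t`; the weight is then `t`
  have hct : c ≠ -(t + t) := fun h => htt (by rw [h, neg_neg])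
  have htt' : t ≠ -(t + t) := fun h => ht3 (by rw [succ_nsmul, two_nsmul]; nth_rw 3 [h]; abel)
  have hB : #C = #({c, t, -(t + t)} : Finset A)ᶜ := by
    rw [card_compl, card_eq_three.mpr ⟨c, t, -(t + t), htc.symm, hct, htt', rfl⟩]
    omega
  have hW : c + ∑ y ∈ ({c, t, -(t + t)} : Finset A)ᶜ, y = t := by
    have hc_notMem : c ∉ ({t, -(t + t)} : Finset A) := by
      simp only [mem_insert, mem_singleton, not_or]
      exact ⟨htc.symm, hct⟩
    rw [sum_compl_eq_neg_sum hodd, sum_insert hc_notMem, sum_pair htt']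
    abel
  exact exists_isGoodLabeling_of_card_eq hC hB (by simp) (by rw [hW]; simp) (by rwa [hW])
    fun _ => hZ

theorem exists_isGoodLabeling (hc : c ≠ 0) (b : A)
    (hC : C.Nonempty) (hCk : #C + 3 ≤ Fintype.card A)
    (hcrit : b = c → #C + 3 = Fintype.card A →
      (∃ u ∈ C, P u) ∨ ((∀ u ∈ C, Z u) ∧ ¬ ∀ a : A, 3 • a = 0)) :
    ∃ σ, IsGoodLabeling C Z P c b σ := by
  classical
  obtain rfl | hbc := eq_or_ne b c
  · rcases hCk.lt_or_eq with hlt | heq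
    · -- weight `0`
      obtain ⟨B, h0B, hcB, hB, hsum⟩ := exists_card_eq_sum_eq_neg hodd hc hC.card_pos (by omega)
      have hW : b + ∑ x ∈ B, x = 0 := by rw [hsum, add_neg_cancel]
      exact exists_isGoodLabeling_of_card_eq hC hB.symm hcB (by rwa [hW])
        (by rw [hW]; exact hc.symm) (absurd · h0B)
    · rcases hcrit rfl heq with ⟨u₀, hu₀, hP⟩ | ⟨hZ, h3⟩
      · exact exists_isGoodLabeling_of_mem hodd hc heq hu₀ hP
      · exact exists_isGoodLabeling_of_forall_mem hodd hc hC heq hZ h3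
  · obtain hC1 | hC2 := (Nat.one_le_iff_ne_zero.mpr hC.card_pos.ne').eq_or_lt
    · -- a single child, labelled `a` with weight `c + a`
      obtain ⟨a, -, ha⟩ := exists_mem_notMem_of_card_lt_card (s := {0, c, b - c}) (t := univ)
        (card_le_three.trans_lt (by rw [card_univ]; omega))
      simp only [mem_insert, mem_singleton, not_or] at ha
      refine exists_isGoodLabeling_of_card_eq (B := {a}) hC (by rw [← hC1, card_singleton])
        (by simpa using fun h => ha.2.1 h.symm) (by simpa using hc) ?_ (by simp [Ne.symm ha.1])
      rw [sum_singleton]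
      exact fun h => ha.2.2 (by rw [← h]; abel)
    · -- weight `c`
      obtain ⟨B, h0B, hcB, hB, hsum⟩ := exists_card_eq_sum_eq_zero hodd hc hC2 hCk
      exact exists_isGoodLabeling_of_card_eq hC hB.symm hcB (by rwa [hsum, add_zero])
        (by rw [hsum, add_zero]; exact hbc.symm) (absurd · h0B)

end GoodLabeling

end TreeTwinColoring

namespace SimpleGraph

variable {V : Type*} {G : SimpleGraph V}

lemma Connected.exists_adj_dist_add_one_eq (hG : G.Connected) {u w : V} (h : u ≠ w) :
    ∃ u', G.Adj u u' ∧ G.dist u' w + 1 = G.dist u w := by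
  obtain ⟨p, hp⟩ := hG.exists_walk_length_eq_dist u w
  have hn : ¬p.Nil := Walk.not_nil_of_ne h
  refine ⟨p.snd, p.adj_snd hn, le_antisymm ?_ ?_⟩
  · have := dist_le p.tail
    have := p.length_tail_add_one hn
    omega
  · have := hG.dist_triangle (u := u) (v := p.snd) (w := w)
    rw [dist_eq_one_iff_adj.mpr (p.adj_snd hn)] at this
    omega

lemma Connected.exists_adj_dist_add_one_eq' (hG : G.Connected) {r v : V} (hv : v ≠ r) :
    ∃ p, G.Adj p v ∧ G.dist r p + 1 = G.dist r v := by
  obtain ⟨p, hp, hd⟩ := hG.exists_adj_dist_add_one_eq hv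
  exact ⟨p, hp.symm, by rwa [dist_comm, dist_comm (u := v)] at hd⟩

lemma IsTree.eq_of_adj_of_dist_add_one_eq (hG : G.IsTree) (r : V) {u u' v : V} (hu : G.Adj u v)
    (hu' : G.Adj u' v) (hd : G.dist r u + 1 = G.dist r v) (hd' : G.dist r u' + 1 = G.dist r v) :
    u = u' := by
  classical
  obtain ⟨q, hq, -⟩ := hG.connected.exists_path_of_dist r v
  suffices ∀ x, G.Adj x v → G.dist r x + 1 = G.dist r v → x = q.penultimate from
    (this u hu hd).trans (this u' hu' hd').symm
  intro x hx hdx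
  obtain ⟨p, hp, hpl⟩ := hG.connected.exists_path_of_dist r x
  have hvp : v ∉ p.support := fun hv => by
    have := dist_le (p.takeUntil v hv)
    have := p.length_takeUntil_le_length hv
    omega
  exact hG.isAcyclic.eq_penultimate_of_adj_end hq hx.symm
    (hG.isAcyclic.mem_support_of_ne_mem_support_of_adj_of_isPath hq hp hx.symm hvp)

variable [Fintype V] [DecidableRel G.Adj]

lemma Connected.one_lt_degree_of_dist_eq_add_one (hG : G.Connected) {u v w : V} (hadj : G.Adj u v)
    (huw : u ≠ w) (hd : G.dist v w = G.dist u w + 1) : 1 < G.degree u := by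
  obtain ⟨u', hu', hd'⟩ := hG.exists_adj_dist_add_one_eq huw
  rw [← card_neighborFinset_eq_degree, one_lt_card]
  exact ⟨u', by simpa using hu', v, by simpa using hadj, by rintro rfl; omega⟩

lemma Connected.dist_eq_dist_add_one_of_degree_eq_one (hG : G.Connected) {r v x : V}
    (hr : G.degree r = 1) (hv : G.Adj r v) (hx : x ≠ r) : G.dist r x = G.dist v x + 1 := by
  obtain ⟨u, hu, hd⟩ := hG.exists_adj_dist_add_one_eq (Ne.symm hx)
  obtain ⟨w, -, huniq⟩ := degree_eq_one_iff_existsUnique_adj.mp hr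
  rwa [(huniq u hu).trans (huniq v hv).symm, eq_comm] at hd

lemma Connected.one_lt_degree_of_adj_of_degree_eq_one (hG : G.Connected)
    (hcard : 3 ≤ Fintype.card V) {r v : V} (hr : G.degree r = 1) (hv : G.Adj r v) :
    1 < G.degree v := by
  classical
  obtain ⟨x, -, hx⟩ := exists_mem_notMem_of_card_lt_card (s := {r, v}) (t := univ)
    (card_le_two.trans_lt (by rw [card_univ]; omega))
  simp only [mem_insert, mem_singleton, not_or] at hx
  exact hG.one_lt_degree_of_dist_eq_add_one hv.symm (Ne.symm hx.2)
    (hG.dist_eq_dist_add_one_of_degree_eq_one hr hv hx.1)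

variable (G)

noncomputable def children (r v : V) : Finset V :=
  {u ∈ G.neighborFinset v | G.dist r u = G.dist r v + 1}

variable {G}

lemma mem_children {r v u : V} : u ∈ G.children r v ↔ G.Adj v u ∧ G.dist r u = G.dist r v + 1 := by
  simp [children]

lemma IsTree.neighborFinset_eq_insert_children [DecidableEq V] (hG : G.IsTree) {r p v : V}
    (hp : G.Adj p v) (hd : G.dist r p + 1 = G.dist r v) :
    G.neighborFinset v = insert p (G.children r v) := by
  ext u
  simp only [mem_neighborFinset, mem_insert, mem_children]
  constructor
  · intro hu
    rcases hG.dist_eq_dist_add_one_of_adj r hu with h | h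
    · exact Or.inl (hG.eq_of_adj_of_dist_add_one_eq r hu.symm hp h.symm hd)
    · exact Or.inr ⟨hu, h⟩
  · rintro (rfl | ⟨hu, -⟩)
    exacts [hp.symm, hu]

lemma IsTree.degree_eq_card_children_add_one [DecidableEq V] (hG : G.IsTree) {r p v : V}
    (hp : G.Adj p v) (hd : G.dist r p + 1 = G.dist r v) :
    G.degree v = #(G.children r v) + 1 := by
  rw [← card_neighborFinset_eq_degree, hG.neighborFinset_eq_insert_children hp hd,
    card_insert_of_notMem (by rw [mem_children]; omega)]

lemma IsTree.exists_mem_children_dist_eq_add (hG : G.IsTree) {r v w : V} (hvw : v ≠ w)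
    (h : G.dist r w = G.dist r v + G.dist v w) :
    ∃ u ∈ G.children r v, G.dist r w = G.dist r u + G.dist u w ∧ (u = w ∨ 1 < G.degree u) := by
  obtain ⟨u, hu, hd⟩ := hG.connected.exists_adj_dist_add_one_eq hvw
  have htri := hG.connected.dist_triangle (u := r) (v := u) (w := w)
  have hru : G.dist r u = G.dist r v + 1 := by
    rcases hG.dist_eq_dist_add_one_of_adj r hu with h' | h' <;> omega
  refine ⟨u, mem_children.mpr ⟨hu, hru⟩, by omega, ?_⟩
  by_cases huw : u = w
  · exact Or.inl huw
  · exact Or.inr (hG.connected.one_lt_degree_of_dist_eq_add_one hu.symm huw hd.symm)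

end SimpleGraph

namespace TreeTwinColoring

section Construction

variable {V : Type} [Fintype V] (T : SimpleGraph V) [DecidableRel T.Adj] (r : V)
  (A : Type) [AddCommGroup A] [Fintype A]

/-- A clash between the label of the edge from `v` to its parent and the parent's weight can be
pushed down and resolved below `v`, unless `A` is an elementary abelian `3`-group and every internal
vertex `w` below `v` (i.e. with `v` on the geodesic from `r` to `w`) has degree `|A| - 2`. -/
def Flexible (v : V) : Prop :=
  (¬ ∀ a : A, 3 • a = 0) ∨
    ∃ w, T.degree w ≠ 1 ∧ T.degree w + 2 ≠ Fintype.card A ∧ T.dist r w = T.dist r v + T.dist v w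

/-- `cb` is the pair (label of the edge from `v` to its parent, weight of that parent). -/
def IsAdmissible (v : V) (cb : A × A) : Prop :=
  (cb.1 = 0 → T.degree v = 1) ∧ (cb.1 = cb.2 → T.degree v ≠ 1 ∧ Flexible T r A v)

noncomputable def childLabeling (v : V) (cb : A × A) : V → A :=
  Classical.epsilon (IsGoodLabeling (T.children r v) (fun u => T.degree u = 1)
    (fun u => T.degree u ≠ 1 ∧ Flexible T r A u) cb.1 cb.2)

noncomputable def childState (v : V) (cb : A × A) (u : V) : A × A :=
  (childLabeling T r A v cb u, cb.1 + ∑ x ∈ T.children r v, childLabeling T r A v cb x)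

open Classical in
/-- The pairs `cb` are chosen from the root downwards; the neighbour of the leaf `r` gets
`(c₀, c₀)`. -/
noncomputable def state (c₀ : A) (v : V) : A × A :=
  if h : ∃ p, T.Adj p v ∧ T.dist r p + 1 = T.dist r v ∧ p ≠ r then
    childState T r A h.choose (state c₀ h.choose) v
  else (c₀, c₀)
termination_by T.dist r v
decreasing_by have := h.choose_spec.2.1; omega

noncomputable def edgeLabeling (c₀ : A) : Sym2 V → A :=
  Sym2.lift ⟨fun x y =>
    if T.dist r x < T.dist r y then (state T r A c₀ y).1
    else if T.dist r y < T.dist r x then (state T r A c₀ x).1 else 0,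
    fun x y => by dsimp only; split_ifs <;> first | rfl | omega⟩

variable {T r A}

lemma state_eq_childState (hT : T.IsTree) (c₀ : A) {p v : V} (hp : T.Adj p v)
    (hd : T.dist r p + 1 = T.dist r v) (hpr : p ≠ r) :
    state T r A c₀ v = childState T r A p (state T r A c₀ p) v := by
  have h : ∃ p, T.Adj p v ∧ T.dist r p + 1 = T.dist r v ∧ p ≠ r := ⟨p, hp, hd, hpr⟩
  have hchoose : h.choose = p :=
    hT.eq_of_adj_of_dist_add_one_eq r h.choose_spec.1 hp h.choose_spec.2.1 hd
  rw [state, dif_pos h, hchoose]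

lemma state_of_adj_root (hT : T.IsTree) (c₀ : A) {v : V} (hv : T.Adj r v) :
    state T r A c₀ v = (c₀, c₀) := by
  rw [state, dif_neg]
  rintro ⟨p, -, hd, hpr⟩
  rw [dist_eq_one_iff_adj.mpr hv, Nat.add_eq_right, hT.connected.dist_eq_zero_iff] at hd
  exact hpr hd.symm

lemma Flexible.exists_child (hT : T.IsTree) {v : V} (hflex : Flexible T r A v)
    (hv : T.degree v + 2 = Fintype.card A) :
    (∃ u ∈ T.children r v, T.degree u ≠ 1 ∧ Flexible T r A u) ∨
      ((∀ u ∈ T.children r v, T.degree u = 1) ∧ ¬ ∀ a : A, 3 • a = 0) := by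
  by_cases h3 : ∀ a : A, 3 • a = 0
  · obtain ⟨w, hw1, hwk, hw⟩ := hflex.resolve_left (not_not.mpr h3)
    obtain ⟨u, hu, hdu, hwu⟩ := hT.exists_mem_children_dist_eq_add (by rintro rfl; exact hwk hv) hw
    refine Or.inl ⟨u, hu, ?_, Or.inr ⟨w, hw1, hwk, hdu⟩⟩
    rcases hwu with rfl | h
    exacts [hw1, h.ne']
  · by_cases hleaf : ∀ u ∈ T.children r v, T.degree u = 1
    · exact Or.inr ⟨hleaf, h3⟩
    · push Not at hleaf
      obtain ⟨u, hu, hdu⟩ := hleaf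
      exact Or.inl ⟨u, hu, hdu, Or.inl h3⟩

lemma isGoodLabeling_childLabeling [DecidableEq V] (hT : T.IsTree)
    (hodd : Odd (Fintype.card A)) (ht : T.maxDegree + 2 ≤ Fintype.card A) {v : V} (hv : v ≠ r)
    {cb : A × A} (hcb : IsAdmissible T r A v cb) :
    IsGoodLabeling (T.children r v) (fun u => T.degree u = 1)
      (fun u => T.degree u ≠ 1 ∧ Flexible T r A u) cb.1 cb.2 (childLabeling T r A v cb) := by
  obtain ⟨p, hp, hd⟩ := hT.connected.exists_adj_dist_add_one_eq' hv
  have hdeg := hT.degree_eq_card_children_add_one hp hd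
  rcases (T.children r v).eq_empty_or_nonempty with h | h
  · refine ⟨by simp [h], ?_, by simp [h]⟩
    rw [h, sum_empty, add_zero]
    exact fun hc => (hcb.2 hc).1 (by rw [hdeg, h, card_empty])
  · have hc : cb.1 ≠ 0 := fun hc => by have := hcb.1 hc; have := h.card_pos; omega
    refine Classical.epsilon_spec (exists_isGoodLabeling hodd hc cb.2 h ?_ fun hb hk => ?_)
    · have := T.degree_le_maxDegree v
      omega
    · exact (hcb.2 hb.symm).2.exists_child hT (by omega)

lemma isAdmissible_state [DecidableEq V] (hT : T.IsTree) (hodd : Odd (Fintype.card A))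
    (ht : T.maxDegree + 2 ≤ Fintype.card A) {c₀ : A} (hc₀ : c₀ ≠ 0)
    (hroot : ∀ v, T.Adj r v → T.degree v ≠ 1 ∧ Flexible T r A v) (v : V) (hv : v ≠ r) :
    IsAdmissible T r A v (state T r A c₀ v) := by
  induction hn : T.dist r v using Nat.strong_induction_on generalizing v with
  | _ n ih =>
    obtain ⟨p, hp, hd⟩ := hT.connected.exists_adj_dist_add_one_eq' hv
    obtain rfl | hpr := eq_or_ne p r
    · rw [state_of_adj_root hT c₀ hp]
      exact ⟨fun h => absurd h hc₀, fun _ => hroot v hp⟩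
    · rw [state_eq_childState hT c₀ hp hd hpr]
      have hgood := isGoodLabeling_childLabeling hT hodd ht hpr (ih _ (by omega) p hpr rfl)
      exact (hgood.2.2 v (mem_children.mpr ⟨hp, hd.symm⟩)).2

lemma flexible_of_adj_of_degree_eq_one (hT : T.IsTree) (hr : T.degree r = 1) {v : V}
    (hv : T.Adj r v)
    (hexc : ¬ ∃ p : ℕ, IsRegularTreeDeg T (3 ^ p - 2) ∧ Nonempty (A ≃+ (Fin p → ZMod 3))) :
    Flexible T r A v := by
  by_cases h3 : ∀ a : A, 3 • a = 0
  · obtain ⟨p, hp, he⟩ := exists_addEquiv_pi_zmod_three h3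
    have hreg : ¬ IsRegularTreeDeg T (3 ^ p - 2) := fun hreg => hexc ⟨p, hreg, he⟩
    simp only [IsRegularTreeDeg, not_forall] at hreg
    obtain ⟨w, hw1, hwk⟩ := hreg
    rw [← hp] at hwk
    have hwr : w ≠ r := by rintro rfl; exact hw1 hr
    have hd := hT.connected.dist_eq_dist_add_one_of_degree_eq_one hr hv hwr
    refine Or.inr ⟨w, hw1, by omega, ?_⟩
    rw [dist_eq_one_iff_adj.mpr hv]
    omega
  · exact Or.inl h3

lemma edgeLabeling_of_dist_lt (c₀ : A) {x y : V} (h : T.dist r x < T.dist r y) :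
    edgeLabeling T r A c₀ s(x, y) = (state T r A c₀ y).1 := by
  simp [edgeLabeling, h]

lemma edgeLabeling_of_mem_children (hT : T.IsTree) (c₀ : A) {v u : V} (hv : v ≠ r)
    (hu : u ∈ T.children r v) :
    edgeLabeling T r A c₀ s(v, u) = childLabeling T r A v (state T r A c₀ v) u := by
  rw [mem_children] at hu
  rw [edgeLabeling_of_dist_lt c₀ (by omega), state_eq_childState hT c₀ hu.1 hu.2.symm hv]
  rfl

lemma sum_edgeLabeling_eq [DecidableEq V] (hT : T.IsTree) (c₀ : A) {v : V} (hv : v ≠ r) :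
    ∑ x ∈ T.neighborFinset v, edgeLabeling T r A c₀ s(x, v) =
      (state T r A c₀ v).1 + ∑ u ∈ T.children r v, childLabeling T r A v (state T r A c₀ v) u := by
  obtain ⟨p, hp, hd⟩ := hT.connected.exists_adj_dist_add_one_eq' hv
  rw [hT.neighborFinset_eq_insert_children hp hd, sum_insert (by rw [mem_children]; omega),
    edgeLabeling_of_dist_lt c₀ (by omega)]
  congr 1
  refine sum_congr rfl fun u hu => ?_
  rw [Sym2.eq_swap, edgeLabeling_of_mem_children hT c₀ hv hu]

lemma sum_edgeLabeling_of_adj [DecidableEq V] (hT : T.IsTree) (hr : T.degree r = 1) (c₀ : A)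
    {p v : V} (hp : T.Adj p v) (hd : T.dist r p + 1 = T.dist r v) :
    ∑ x ∈ T.neighborFinset p, edgeLabeling T r A c₀ s(x, p) = (state T r A c₀ v).2 := by
  obtain rfl | hpr := eq_or_ne p r
  · obtain ⟨w, hw⟩ := card_eq_one.mp ((T.card_neighborFinset_eq_degree p).trans hr)
    have hvw : v = w := by simpa [hw] using (T.mem_neighborFinset p v).2 hp
    rw [hw, sum_singleton, ← hvw, Sym2.eq_swap, edgeLabeling_of_dist_lt c₀ (by omega),
      state_of_adj_root hT c₀ hp]
  · rw [sum_edgeLabeling_eq hT c₀ hpr, state_eq_childState hT c₀ hp hd hpr]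
    rfl

variable [DecidableEq V] (hT : T.IsTree) (hodd : Odd (Fintype.card A))
  (ht : T.maxDegree + 2 ≤ Fintype.card A) {c₀ : A} (hc₀ : c₀ ≠ 0)
  (hroot : ∀ v, T.Adj r v → T.degree v ≠ 1 ∧ Flexible T r A v)
include hT hodd ht hc₀ hroot

lemma sum_edgeLabeling_ne {v : V} (hv : v ≠ r) :
    ∑ x ∈ T.neighborFinset v, edgeLabeling T r A c₀ s(x, v) ≠ (state T r A c₀ v).2 := by
  rw [sum_edgeLabeling_eq hT c₀ hv]
  exact (isGoodLabeling_childLabeling hT hodd ht hv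
    (isAdmissible_state hT hodd ht hc₀ hroot v hv)).2.1

lemma edgeLabeling_ne (hr : T.degree r = 1) {x y z : V} (hy : T.Adj x y) (hz : T.Adj x z)
    (hyz : y ≠ z) : edgeLabeling T r A c₀ s(x, y) ≠ edgeLabeling T r A c₀ s(x, z) := by
  obtain rfl | hxr := eq_or_ne x r
  · obtain ⟨w, -, huniq⟩ := degree_eq_one_iff_existsUnique_adj.mp hr
    exact absurd ((huniq y hy).trans (huniq z hz).symm) hyz
  obtain ⟨p, hp, hd⟩ := hT.connected.exists_adj_dist_add_one_eq' hxr
  have hgood := isGoodLabeling_childLabeling hT hodd ht hxr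
    (isAdmissible_state hT hodd ht hc₀ hroot x hxr)
  rw [← mem_neighborFinset, hT.neighborFinset_eq_insert_children hp hd, mem_insert] at hy hz
  rcases hy with rfl | hy <;> rcases hz with rfl | hz
  · exact absurd rfl hyz
  · rw [Sym2.eq_swap, edgeLabeling_of_dist_lt c₀ (by omega),
      edgeLabeling_of_mem_children hT c₀ hxr hz]
    exact fun h => (hgood.2.2 z hz).1 h.symm
  · rw [edgeLabeling_of_mem_children hT c₀ hxr hy, Sym2.eq_swap (a := x),
      edgeLabeling_of_dist_lt c₀ (by omega)]
    exact (hgood.2.2 y hy).1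
  · rw [edgeLabeling_of_mem_children hT c₀ hxr hy, edgeLabeling_of_mem_children hT c₀ hxr hz]
    exact fun h => hyz (hgood.1 hy hz h)

theorem isTwinEdgeColoring_edgeLabeling (hr : T.degree r = 1) :
    IsTwinEdgeColoring T (edgeLabeling T r A c₀) := by
  refine ⟨fun x y z hy hz hyz => edgeLabeling_ne hT hodd ht hc₀ hroot hr hy hz hyz,
    fun u v huv => ?_⟩
  rcases hT.dist_eq_dist_add_one_of_adj r huv with h | h
  · rw [sum_edgeLabeling_of_adj hT hr c₀ huv.symm h.symm]
    exact sum_edgeLabeling_ne hT hodd ht hc₀ hroot (by rintro rfl; simp at h)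
  · rw [sum_edgeLabeling_of_adj hT hr c₀ huv h.symm]
    exact (sum_edgeLabeling_ne hT hodd ht hc₀ hroot (by rintro rfl; simp at h)).symm

end Construction

end TreeTwinColoring

open TreeTwinColoring in
theorem tree_twin_coloring_of_odd_order_general {V : Type} [Fintype V] (T : SimpleGraph V)
    [DecidableRel T.Adj] (hT : T.IsTree) (hcard : 3 ≤ Fintype.card V)
    (A : Type) [AddCommGroup A] [Fintype A] (hodd : Odd (Fintype.card A))
    (ht : T.maxDegree + 2 ≤ Fintype.card A)
    (hexc : ¬ ∃ p : ℕ, IsRegularTreeDeg T (3 ^ p - 2) ∧ Nonempty (A ≃+ (Fin p → ZMod 3))) :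
    ∃ f : Sym2 V → A, IsTwinEdgeColoring T f := by
  classical
  have : Nontrivial V := Fintype.one_lt_card_iff_nontrivial.mp (by omega)
  obtain ⟨r, hr⟩ := hT.exists_vert_degree_one_of_nontrivial
  have : Nontrivial A := Fintype.one_lt_card_iff_nontrivial.mp (by omega)
  obtain ⟨c₀, hc₀⟩ := exists_ne (0 : A)
  refine ⟨_, isTwinEdgeColoring_edgeLabeling hT hodd ht hc₀ (fun v hv => ⟨?_, ?_⟩) hr⟩
  · exact (hT.connected.one_lt_degree_of_adj_of_degree_eq_one hcard hr hv).ne'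
  · exact flexible_of_adj_of_degree_eq_one hT hr hv hexc

/-- Let `T` be a tree of order at least `3` with maximum degree `t` and let `𝒢` be an
Abelian group of odd order `k ≥ max {7, t + 2}`.  Then there exists a `𝒢`-twin edge
coloring of `T`, unless `T` is a `(3^p - 2)`-regular tree and `𝒢 ≅ (ℤ₃)^p` for some
integer `p`. -/
theorem tree_twin_coloring_of_odd_order {V : Type} [Fintype V] (T : SimpleGraph V)
    [DecidableRel T.Adj] (hT : T.IsTree) (hcard : 3 ≤ Fintype.card V)
    (A : Type) [AddCommGroup A] [Fintype A] (hodd : Odd (Fintype.card A))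
    (h7 : 7 ≤ Fintype.card A) (ht : T.maxDegree + 2 ≤ Fintype.card A)
    (hexc : ¬ ∃ p : ℕ, IsRegularTreeDeg T (3 ^ p - 2) ∧ Nonempty (A ≃+ (Fin p → ZMod 3))) :
    ∃ f : Sym2 V → A, IsTwinEdgeColoring T f :=
  tree_twin_coloring_of_odd_order_general T hT hcard A hodd ht hexc
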